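/- Let ((Δ_i)_{i≥0}, (ψ_i)_{i≥0}) be a 1-parameter formal deformation of a Coder pair (C, ψ_C), and suppose n ≥ 1 is such that (Δ_i, ψ_i) = (0, 0) for all 1 ≤ i ≤ n. Then (Δ_{n+1}, ψ_{n+1}) is a 2-cocycle of the Coder-pair complex of (C, ψ_C) with coefficients in the coadjoint bicomodule: δ_c(Δ_{n+1}) = 0 and δ_c(ψ_{n+1}) + ω(Δ_{n+1}) = 0. -/

import Mathlib

open TensorProduct LinearMap

variable {k C : Type} [Field k] [AddCommGroup C] [Module k C]

/-- `δ_c(g) = (Id_C ⊗ g) ∘ Δ − Δ ∘ g + (g ⊗ Id_C) ∘ Δ` for `g ∈ Hom(C, C)`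
(coadjoint coefficients). -/
noncomputable def delta1 (Δ : C →ₗ[k] C ⊗[k] C) (g : C →ₗ[k] C) : C →ₗ[k] C ⊗[k] C :=
  LinearMap.lTensor C g ∘ₗ Δ - Δ ∘ₗ g + LinearMap.rTensor C g ∘ₗ Δ

/-- `δ_c(f) = (Id_C ⊗ f) ∘ Δ − (Δ ⊗ Id_C) ∘ f + (Id_C ⊗ Δ) ∘ f − (f ⊗ Id_C) ∘ Δ`
for `f ∈ Hom(C, C ⊗ C)` (coadjoint coefficients). -/
noncomputable def delta2 (Δ : C →ₗ[k] C ⊗[k] C) (f : C →ₗ[k] C ⊗[k] C) :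
    C →ₗ[k] C ⊗[k] (C ⊗[k] C) :=
  LinearMap.lTensor C f ∘ₗ Δ
    - (TensorProduct.assoc k C C C).toLinearMap ∘ₗ LinearMap.rTensor C Δ ∘ₗ f
    + LinearMap.lTensor C Δ ∘ₗ f
    - (TensorProduct.assoc k C C C).toLinearMap ∘ₗ LinearMap.rTensor C f ∘ₗ Δ

/-- `ω(g) = ψ_C ∘ g − g ∘ ψ_C` for `g ∈ Hom(C, C)`. -/
noncomputable def omega1 (ψC : C →ₗ[k] C) (g : C →ₗ[k] C) : C →ₗ[k] C :=
  ψC ∘ₗ g - g ∘ₗ ψC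

/-- `ω(f) = (ψ_C ⊗ Id_C) ∘ f + (Id_C ⊗ ψ_C) ∘ f − f ∘ ψ_C` for `f ∈ Hom(C, C ⊗ C)`. -/
noncomputable def omega2 (ψC : C →ₗ[k] C) (f : C →ₗ[k] C ⊗[k] C) : C →ₗ[k] C ⊗[k] C :=
  LinearMap.rTensor C ψC ∘ₗ f + LinearMap.lTensor C ψC ∘ₗ f - f ∘ₗ ψC

/-- A 1-parameter formal deformation `(Δ_t = Σ Δ_i t^i, ψ_t = Σ ψ_i t^i)` of a Coder
pair `(C, ψ_C)`: `Δ_0 = Δ`, `ψ_0 = ψ_C`, and for every `k ≥ 0`,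
`Σ_{i+j=k} ((Id_C ⊗ Δ_i) ∘ Δ_j − (Δ_i ⊗ Id_C) ∘ Δ_j) = 0` and
`Σ_{i+j=k} (Δ_i ∘ ψ_j − (ψ_i ⊗ Id_C) ∘ Δ_j − (Id_C ⊗ ψ_i) ∘ Δ_j) = 0`. -/
noncomputable def IsFormalDeformation (Δ : C →ₗ[k] C ⊗[k] C) (ψC : C →ₗ[k] C)
    (Δs : ℕ → (C →ₗ[k] C ⊗[k] C)) (ψs : ℕ → (C →ₗ[k] C)) : Prop :=
  Δs 0 = Δ ∧ ψs 0 = ψC ∧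
  (∀ n : ℕ, ∑ p ∈ Finset.HasAntidiagonal.antidiagonal n, LinearMap.lTensor C (Δs p.1) ∘ₗ Δs p.2
      = ∑ p ∈ Finset.HasAntidiagonal.antidiagonal n,
          (TensorProduct.assoc k C C C).toLinearMap ∘ₗ LinearMap.rTensor C (Δs p.1) ∘ₗ Δs p.2) ∧
  (∀ n : ℕ, ∑ p ∈ Finset.HasAntidiagonal.antidiagonal n, Δs p.1 ∘ₗ ψs p.2
      = ∑ p ∈ Finset.HasAntidiagonal.antidiagonal n,
          (LinearMap.rTensor C (ψs p.1) ∘ₗ Δs p.2 + LinearMap.lTensor C (ψs p.1) ∘ₗ Δs p.2))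

/-!
Only the two extreme terms `(0, n + 1)` and `(n + 1, 0)` survive in the order-`(n + 1)` parts
of the deformation equations, since every other term has a factor `Δ_i` or `ψ_i` with
`1 ≤ i ≤ n`. What remains is the linearisation at `(Δ, ψ_C)` of coassociativity and of the
coderivation identity, evaluated at `(Δ_{n+1}, ψ_{n+1})`, i.e. exactly the cocycle equations.
-/

theorem Finset.Nat.sum_antidiagonal_succ_eq_add_of_eq_zero {M : Type*} [AddCommMonoid M]
    {n : ℕ} {f : ℕ × ℕ → M} (hf : ∀ i j, 1 ≤ i → i ≤ n → f (i, j) = 0) :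
    ∑ p ∈ antidiagonal (n + 1), f p = f (0, n + 1) + f (n + 1, 0) := by
  refine Finset.sum_eq_add_of_mem _ _ (by simp) (by simp) (by simp) ?_
  rintro ⟨i, j⟩ hij ⟨hi, hj⟩
  rw [HasAntidiagonal.mem_antidiagonal] at hij
  exact hf i j (by grind) (by grind)

theorem delta2_eq_zero_iff (Δ : C →ₗ[k] C ⊗[k] C) (f : C →ₗ[k] C ⊗[k] C) :
    delta2 Δ f = 0 ↔
      lTensor C Δ ∘ₗ f + lTensor C f ∘ₗ Δ =
        (TensorProduct.assoc k C C C).toLinearMap ∘ₗ rTensor C Δ ∘ₗ f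
          + (TensorProduct.assoc k C C C).toLinearMap ∘ₗ rTensor C f ∘ₗ Δ := by
  rw [iff_comm, ← sub_eq_zero]
  convert Iff.rfl using 2
  rw [delta2]
  abel

theorem delta1_add_omega2_eq_zero_iff (Δ : C →ₗ[k] C ⊗[k] C) (ψC g : C →ₗ[k] C)
    (f : C →ₗ[k] C ⊗[k] C) :
    delta1 Δ g + omega2 ψC f = 0 ↔
      Δ ∘ₗ g + f ∘ₗ ψC =
        (rTensor C ψC ∘ₗ f + lTensor C ψC ∘ₗ f) + (rTensor C g ∘ₗ Δ + lTensor C g ∘ₗ Δ) := by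
  rw [iff_comm, eq_comm, ← sub_eq_zero]
  convert Iff.rfl using 2
  rw [delta1, omega2]
  abel

namespace IsFormalDeformation

variable {Δ : C →ₗ[k] C ⊗[k] C} {ψC : C →ₗ[k] C} {Δs : ℕ → (C →ₗ[k] C ⊗[k] C)}
  {ψs : ℕ → (C →ₗ[k] C)}

theorem coassoc_of_vanishing (hdef : IsFormalDeformation Δ ψC Δs ψs) {n : ℕ}
    (hvanish : ∀ i, 1 ≤ i → i ≤ n → Δs i = 0) :
    lTensor C Δ ∘ₗ Δs (n + 1) + lTensor C (Δs (n + 1)) ∘ₗ Δ =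
      (TensorProduct.assoc k C C C).toLinearMap ∘ₗ rTensor C Δ ∘ₗ Δs (n + 1)
        + (TensorProduct.assoc k C C C).toLinearMap ∘ₗ rTensor C (Δs (n + 1)) ∘ₗ Δ := by
  obtain ⟨hΔ₀, -, hcoassoc, -⟩ := hdef
  have h := hcoassoc (n + 1)
  rwa [Finset.Nat.sum_antidiagonal_succ_eq_add_of_eq_zero (by simp +contextual [hvanish]),
    Finset.Nat.sum_antidiagonal_succ_eq_add_of_eq_zero (by simp +contextual [hvanish]),
    hΔ₀] at h

theorem coder_of_vanishing (hdef : IsFormalDeformation Δ ψC Δs ψs) {n : ℕ}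
    (hvanish : ∀ i, 1 ≤ i → i ≤ n → Δs i = 0 ∧ ψs i = 0) :
    Δ ∘ₗ ψs (n + 1) + Δs (n + 1) ∘ₗ ψC =
      (rTensor C ψC ∘ₗ Δs (n + 1) + lTensor C ψC ∘ₗ Δs (n + 1))
        + (rTensor C (ψs (n + 1)) ∘ₗ Δ + lTensor C (ψs (n + 1)) ∘ₗ Δ) := by
  obtain ⟨hΔ₀, hψ₀, -, hcoder⟩ := hdef
  have h := hcoder (n + 1)
  rwa [Finset.Nat.sum_antidiagonal_succ_eq_add_of_eq_zero (by simp +contextual [hvanish]),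
    Finset.Nat.sum_antidiagonal_succ_eq_add_of_eq_zero (by simp +contextual [hvanish]),
    hΔ₀, hψ₀] at h

end IsFormalDeformation

theorem first_nonzero_term_is_two_cocycle_general
    (Δ : C →ₗ[k] C ⊗[k] C)
    (ψC : C →ₗ[k] C)
    (Δs : ℕ → (C →ₗ[k] C ⊗[k] C)) (ψs : ℕ → (C →ₗ[k] C))
    (hdef : IsFormalDeformation Δ ψC Δs ψs)
    (n : ℕ)
    (hvanish : ∀ i : ℕ, 1 ≤ i → i ≤ n → Δs i = 0 ∧ ψs i = 0) :
    delta2 Δ (Δs (n + 1)) = 0 ∧ delta1 Δ (ψs (n + 1)) + omega2 ψC (Δs (n + 1)) = 0 :=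
  ⟨(delta2_eq_zero_iff _ _).2 (hdef.coassoc_of_vanishing fun i h₁ h₂ => (hvanish i h₁ h₂).1),
    (delta1_add_omega2_eq_zero_iff _ _ _ _).2 (hdef.coder_of_vanishing hvanish)⟩

/-- If a 1-parameter formal deformation of a Coder pair `(C, ψ_C)` has
`(Δ_i, ψ_i) = 0` for all `1 ≤ i ≤ n`, then `(Δ_{n+1}, ψ_{n+1})` is a 2-cocycle of the
Coder-pair complex with coefficients in the coadjoint bicomodule:
`δ_c(Δ_{n+1}) = 0` and `δ_c(ψ_{n+1}) + ω(Δ_{n+1}) = 0`. -/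
theorem first_nonzero_term_is_two_cocycle [CharZero k]
    (Δ : C →ₗ[k] C ⊗[k] C)
    (hΔ : (TensorProduct.assoc k C C C).toLinearMap ∘ₗ LinearMap.rTensor C Δ ∘ₗ Δ
        = LinearMap.lTensor C Δ ∘ₗ Δ)
    (ψC : C →ₗ[k] C)
    (hψC : Δ ∘ₗ ψC = LinearMap.rTensor C ψC ∘ₗ Δ + LinearMap.lTensor C ψC ∘ₗ Δ)
    (Δs : ℕ → (C →ₗ[k] C ⊗[k] C)) (ψs : ℕ → (C →ₗ[k] C))
    (hdef : IsFormalDeformation Δ ψC Δs ψs)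
    (n : ℕ) (hn : 1 ≤ n)
    (hvanish : ∀ i : ℕ, 1 ≤ i → i ≤ n → Δs i = 0 ∧ ψs i = 0) :
    delta2 Δ (Δs (n + 1)) = 0 ∧ delta1 Δ (ψs (n + 1)) + omega2 ψC (Δs (n + 1)) = 0 :=
  first_nonzero_term_is_two_cocycle_general Δ ψC Δs ψs hdef n hvanish
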